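/- For every x ∈ ℝ, the limit as k → 0⁺ of q_k(x) / ((1/2)·log(1/√k)) equals |x|. -/

import Mathlib

/-- The implicit regularizer `q_k` of the diagonal linear network. -/
noncomputable def qk (k x : ℝ) : ℝ :=
  Real.sqrt k / 4 * (1 - Real.sqrt (1 + 4 * x ^ 2 / k)
    + 2 * x / Real.sqrt k * Real.arsinh (2 * x / Real.sqrt k))

/-!
For `k > 0` and `x > 0`, writing `arsinh (2x/√k) = log (2x + √(k + 4x²)) - log √k` splits
`q_k(x)` into `x · (1/2) log (1/√k)` plus a remainder that stays bounded (indeed continuous) as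
`k → 0⁺`. Since `(1/2) log (1/√k) → ∞`, the quotient tends to `x`; evenness of `q_k` and
`q_k(0) = 0` take care of the other signs.
-/

open Filter Real Topology

lemma qk_neg (k x : ℝ) : qk k (-x) = qk k x := by
  rw [qk, qk, mul_neg, neg_div, arsinh_neg, neg_sq]
  ring

lemma qk_abs (k x : ℝ) : qk k |x| = qk k x := by
  rcases abs_choice x with h | h <;> rw [h]
  exact qk_neg k x

lemma qk_zero_right (k : ℝ) : qk k 0 = 0 := by
  simp [qk]

noncomputable def qkRemainder (x k : ℝ) : ℝ :=
  (√k - √(k + 4 * x ^ 2)) / 4 + x / 2 * log (2 * x + √(k + 4 * x ^ 2))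

lemma qk_eq_remainder_add {k x : ℝ} (hk : 0 < k) (hx : 0 < x) :
    qk k x = qkRemainder x k + x * (1 / 2 * log (1 / √k)) := by
  have hsk : 0 < √k := sqrt_pos.2 hk
  have hsqrt : √(1 + 4 * x ^ 2 / k) = √(k + 4 * x ^ 2) / √k := by
    rw [← sqrt_div' _ hk.le, add_div, div_self hk.ne']
  have harsinh : arsinh (2 * x / √k) = log (2 * x + √(k + 4 * x ^ 2)) + log (1 / √k) := by
    have hsq : (2 * x / √k) ^ 2 = 4 * x ^ 2 / k := by
      rw [div_pow, sq_sqrt hk.le]; ring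
    rw [arsinh, hsq, hsqrt, ← add_div, div_eq_mul_one_div,
      log_mul (by positivity) (by positivity)]
  rw [qk, qkRemainder, hsqrt, harsinh]
  field_simp
  ring

lemma continuousAt_qkRemainder {x : ℝ} (hx : 0 < x) : ContinuousAt (qkRemainder x) 0 := by
  have hpos : 2 * x + √(0 + 4 * x ^ 2) ≠ 0 := by positivity
  unfold qkRemainder
  fun_prop (disch := exact hpos)

lemma tendsto_half_log_one_div_sqrt :
    Tendsto (fun k => 1 / 2 * log (1 / √k)) (𝓝[>] 0) atTop := by
  have hsqrt : Tendsto (fun k : ℝ => √k) (𝓝[>] 0) (𝓝[>] 0) :=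
    tendsto_nhdsWithin_iff.2
      ⟨continuous_sqrt.continuousWithinAt.tendsto.trans_eq (by rw [sqrt_zero]),
        eventually_nhdsWithin_of_forall fun _ hk => sqrt_pos.2 hk⟩
  refine Tendsto.const_mul_atTop (by norm_num) ?_
  simp_rw [one_div, log_inv]
  exact tendsto_neg_atBot_atTop.comp (tendsto_log_nhdsGT_zero.comp hsqrt)

lemma tendsto_add_mul_div_self {α : Type*} {l : Filter α} {f g : α → ℝ} {c : ℝ} (a : ℝ)
    (hf : Tendsto f l (𝓝 c)) (hg : Tendsto g l atTop) :
    Tendsto (fun t => (f t + a * g t) / g t) l (𝓝 a) := by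
  have hfg : Tendsto (fun t => f t / g t + a) l (𝓝 (0 + a)) :=
    (hf.div_atTop hg).add_const a
  rw [zero_add] at hfg
  refine hfg.congr' ?_
  filter_upwards [hg.eventually_ne_atTop 0] with t ht
  field_simp

/-- for every `x`, `q_k(x) / ((1/2)·log(1/√k)) → |x|` as `k → 0⁺`. -/
theorem stmt_4 (x : ℝ) :
    Filter.Tendsto (fun k => qk k x / (1 / 2 * Real.log (1 / Real.sqrt k)))
      (nhdsWithin 0 (Set.Ioi 0)) (nhds |x|) := by
  simp_rw [← qk_abs _ x]
  rcases (abs_nonneg x).eq_or_lt with hx | hx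
  · simp [← hx, qk_zero_right]
  have hrem : Tendsto (qkRemainder |x|) (𝓝[>] 0) (𝓝 (qkRemainder |x| 0)) :=
    (continuousAt_qkRemainder hx).tendsto.mono_left nhdsWithin_le_nhds
  refine (tendsto_add_mul_div_self |x| hrem tendsto_half_log_one_div_sqrt).congr' ?_
  filter_upwards [self_mem_nhdsWithin] with k hk
  rw [qk_eq_remainder_add hk hx]
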